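/- arXiv:1209.5652 — 3 statements merged into one kernel-verified Lean document; each statement's English description precedes it below -/
import Mathlib

section
/- For every complex number x, the series x · Σ_{n=1}^∞ (μ(n) / n²) · exp(-x / n²), where μ is the Möbius function, converges absolutely, and its sum equals Riesz(x). -/
/-! Expand each `exp (-x / n²)` in its power series. The double series over `(n, k)` is dominated
by `(1 / n²) · ‖x‖ ^ k / k!`, hence absolutely summable, so the two summations may be swapped;
the inner sum over `n` at fixed `k` is the Dirichlet series `∑ μ(n) / n ^ (2k + 2) = 1 / ζ(2k + 2)`. -/

open Complex

section ExpSeries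

variable {ι : Type*} {c t : ι → ℂ}

theorem summable_norm_mul_exp_mul (hc : Summable (‖c ·‖)) (ht : ∀ i, ‖t i‖ ≤ 1) (z : ℂ) :
    Summable fun i => ‖c i * exp (z * t i)‖ := by
  refine (hc.mul_right (Real.exp ‖z‖)).of_nonneg_of_le (fun _ => norm_nonneg _) fun i => ?_
  rw [norm_mul]
  gcongr
  calc ‖exp (z * t i)‖ ≤ Real.exp ‖z * t i‖ := norm_exp_le_exp_norm _
    _ ≤ Real.exp ‖z‖ := by
      rw [norm_mul]; gcongr; exact mul_le_of_le_one_right (norm_nonneg z) (ht i)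

theorem summable_mul_expSeries_terms (hc : Summable (‖c ·‖)) (ht : ∀ i, ‖t i‖ ≤ 1) (z : ℂ) :
    Summable fun p : ι × ℕ => c p.1 * ((z * t p.1) ^ p.2 / p.2.factorial) := by
  refine .of_norm_bounded ((hc.mul_of_nonneg (Real.summable_pow_div_factorial ‖z‖)
    (fun _ => norm_nonneg _) fun k => by positivity)) fun ⟨i, k⟩ => ?_
  simp only [norm_mul, norm_div, norm_pow, Complex.norm_natCast]
  gcongr
  exact mul_le_of_le_one_right (norm_nonneg z) (ht i)

theorem hasSum_exp_moment_series (hc : Summable (‖c ·‖)) (ht : ∀ i, ‖t i‖ ≤ 1) (z : ℂ) :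
    HasSum (fun k : ℕ => z ^ k / k.factorial * ∑' i, c i * t i ^ k)
      (∑' i, c i * exp (z * t i)) := by
  set F : ι × ℕ → ℂ := fun p => c p.1 * ((z * t p.1) ^ p.2 / p.2.factorial)
  have hF : Summable F := summable_mul_expSeries_terms hc ht z
  have hrow (i : ι) : HasSum (fun k => F (i, k)) (c i * exp (z * t i)) := by
    have h := NormedSpace.expSeries_div_hasSum_exp (z * t i)
    rw [← exp_eq_exp_ℂ] at h
    exact h.mul_left (c i)
  have hcol (k : ℕ) : HasSum (fun i => F (i, k)) (z ^ k / k.factorial * ∑' i, c i * t i ^ k) := by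
    have hsum : Summable fun i => F (i, k) := hF.comp_injective fun _ _ h => (Prod.mk.inj h).1
    convert hsum.hasSum using 1
    rw [← tsum_mul_left]
    congr 1 with i
    simp only [F, mul_pow]
    ring
  rw [(hF.hasSum.prod_fiberwise hrow).tsum_eq]
  exact ((Equiv.prodComm ℕ ι).hasSum_iff.mpr hF.hasSum).prod_fiberwise hcol

end ExpSeries

open ArithmeticFunction in
theorem hasSum_moebius_div_cpow {s : ℂ} (hs : 1 < s.re) :
    HasSum (fun n : ℕ => (moebius (n + 1) : ℂ) / ((n + 1 : ℕ) : ℂ) ^ s) (riemannZeta s)⁻¹ := by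
  have hL : LSeriesHasSum (fun n => moebius n) s (riemannZeta s)⁻¹ := by
    rw [← LSeries_one_eq_riemannZeta hs,
      ← eq_inv_of_mul_eq_one_right (LSeries_one_mul_Lseries_moebius hs)]
    exact (LSeriesSummable_moebius_iff.mpr hs).LSeriesHasSum
  simpa [LSeries.term_of_ne_zero] using (hasSum_nat_add_iff' 1).mpr hL

/-- For every complex number `x`, the series
`x · Σ_{n≥1} (μ(n)/n²) exp(-x/n²)` (with `μ` the Möbius function) converges absolutely and
its sum equals `Riesz(x) = Σ_{k≥1} (-1)^{k+1} x^k / ((k-1)! ζ(2k))` (written with the index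
shifted by one). -/
theorem riesz_eq_moebius_exp_series (x : ℂ) :
    (Summable fun n : ℕ =>
      ‖(ArithmeticFunction.moebius (n + 1) : ℂ) / ((n + 1 : ℕ) : ℂ) ^ 2 *
        Complex.exp (-x / ((n + 1 : ℕ) : ℂ) ^ 2)‖) ∧
    x * ∑' n : ℕ, (ArithmeticFunction.moebius (n + 1) : ℂ) / ((n + 1 : ℕ) : ℂ) ^ 2 *
        Complex.exp (-x / ((n + 1 : ℕ) : ℂ) ^ 2) =
      ∑' k : ℕ, (-1 : ℂ) ^ k * x ^ (k + 1) /
        ((Nat.factorial k : ℂ) * riemannZeta (2 * ((k : ℂ) + 1))) := by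
  let c : ℕ → ℂ := fun n => (ArithmeticFunction.moebius (n + 1) : ℂ) / ((n + 1 : ℕ) : ℂ) ^ 2
  let t : ℕ → ℂ := fun n => (((n + 1 : ℕ) : ℂ) ^ 2)⁻¹
  have hmoment (k : ℕ) : HasSum (fun n => c n * t n ^ k) (riemannZeta (2 * ((k : ℂ) + 1)))⁻¹ := by
    have hs : 2 * ((k : ℂ) + 1) = ((2 * (k + 1) : ℕ) : ℂ) := by push_cast; ring
    rw [hs]
    convert hasSum_moebius_div_cpow (s := ((2 * (k + 1) : ℕ) : ℂ)) (by simp; norm_cast; omega)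
      using 2 with n
    simp only [c, t]
    rw [cpow_natCast, pow_mul, pow_succ' (((n + 1 : ℕ) : ℂ) ^ 2), inv_pow, ← div_eq_mul_inv, div_div]
  have hc : Summable (‖c ·‖) := by
    simpa only [pow_zero, mul_one] using summable_norm_iff.mpr (hmoment 0).summable
  have ht (n : ℕ) : ‖t n‖ ≤ 1 := by
    simp only [t, norm_inv, norm_pow, Complex.norm_natCast]
    exact inv_le_one_of_one_le₀ (one_le_pow₀ (Nat.one_le_cast.mpr n.succ_pos))
  refine ⟨summable_norm_mul_exp_mul hc ht (-x), ?_⟩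
  calc x * ∑' n, c n * exp (-x * t n)
      = x * ∑' k : ℕ, (-x) ^ k / k.factorial * ∑' n, c n * t n ^ k := by
        rw [(hasSum_exp_moment_series hc ht (-x)).tsum_eq]
    _ = _ := by
      rw [← tsum_mul_left]
      congr 1 with k
      rw [(hmoment k).tsum_eq, neg_pow]
      ring
end

section
/- Let (a_n) be a sequence of complex numbers, and let σ be the abscissa of absolute convergence of the Dirichlet series f(s) = Σ_{n=1}^∞ a_n n^{-s} (i.e., the infimum of real s for which Σ |a_n| n^{-s} converges), and let c > max(σ, 0). Then for every real s with -1 < s < -σ/c, the Mellin transform of R_c exists and ∫_0^∞ R_c(x) x^{s-1} dx = f(-cs) · Γ(s+1). -/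
/-!
Writing `f(c(k+1)) = Σₙ aₙ pₙ^(k+1)` with `pₙ = n^(-c) ∈ (0, 1]` and exchanging the two
(absolutely convergent) sums turns the power series into `R_c(x) = x Σₙ aₙ pₙ e^(-pₙ x)`.
Each term has Mellin transform `Γ(s+1) aₙ pₙ^(-s) = Γ(s+1) aₙ n^(cs)`, and the same computation
with `|aₙ|` in place of `aₙ` converges because `σ < -cs`; this justifies integrating term by term
and gives `Γ(s+1) f(-cs)`.
-/

open Complex MeasureTheory Set Filter
open scoped ENNReal Nat

theorem div_natCast_cpow_ofReal (z : ℂ) (n : ℕ) (x : ℝ) :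
    z / (n : ℂ) ^ (x : ℂ) = z * ((n : ℝ) ^ (-x) : ℝ) := by
  rw [Real.rpow_neg n.cast_nonneg, ofReal_inv, ← div_eq_mul_inv,
    ofReal_cpow n.cast_nonneg, ofReal_natCast]

theorem norm_div_natCast_cpow_ofReal (z : ℂ) (n : ℕ) (x : ℝ) :
    ‖z / (n : ℂ) ^ (x : ℂ)‖ = ‖z‖ * (n : ℝ) ^ (-x) := by
  rw [div_natCast_cpow_ofReal, norm_mul, norm_real,
    Real.norm_of_nonneg (Real.rpow_nonneg n.cast_nonneg _)]

section

variable {a : ℕ → ℂ} {σ c x : ℝ}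

theorem summable_norm_mul_rpow_neg_rpow
    (hconv : ∀ s : ℂ, σ < s.re → Summable fun n : ℕ ↦ ‖a (n + 1) / ((n + 1 : ℕ) : ℂ) ^ s‖)
    (hx : σ < c * x) :
    Summable fun n : ℕ ↦ ‖a (n + 1)‖ * (((n + 1 : ℕ) : ℝ) ^ (-c)) ^ x :=
  (hconv _ (by rwa [ofReal_re])).congr fun n ↦ by
    rw [norm_div_natCast_cpow_ofReal, ← Real.rpow_mul n.succ.cast_nonneg, neg_mul]

theorem eq_tsum_mul_rpow_neg_rpow {f : ℂ → ℂ}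
    (hf : ∀ s : ℂ, σ < s.re → f s = ∑' n : ℕ, a (n + 1) / ((n + 1 : ℕ) : ℂ) ^ s)
    (hx : σ < c * x) :
    f ((c * x : ℝ) : ℂ) = ∑' n : ℕ, a (n + 1) * (((((n + 1 : ℕ) : ℝ) ^ (-c)) ^ x : ℝ) : ℂ) := by
  rw [hf _ (by rwa [ofReal_re])]
  exact tsum_congr fun n ↦ by
    rw [div_natCast_cpow_ofReal, ← Real.rpow_mul n.succ.cast_nonneg, neg_mul]

end

theorem MeasureTheory.integrable_tsum_of_summable_integral_norm {α E ι : Type*}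
    [MeasurableSpace α] {μ : Measure α} [NormedAddCommGroup E] [CompleteSpace E] [Countable ι]
    {F : ι → α → E} (hF_int : ∀ i, Integrable (F i) μ)
    (hF_sum : Summable fun i ↦ ∫ a, ‖F i a‖ ∂μ) :
    Integrable (fun a ↦ ∑' i, F i a) μ := by
  set G : ι → α →₁[μ] E := fun i ↦ (hF_int i).toL1 (F i)
  have hG : ∑' i, ‖G i‖ₑ ≠ ∞ := by
    refine tsum_enorm_ne_top_iff_summable_norm.2 (hF_sum.congr fun i ↦ ?_)
    exact (L1.norm_of_fun_eq_integral_norm (hF_int i)).symm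
  refine (L1.integrable_coeFn (∑' i, G i)).congr ?_
  filter_upwards [Lp.coeFn_tsum hG, ae_all_iff.2 fun i ↦ (hF_int i).coeFn_toL1] with a hsum hG
  rw [hsum]
  exact tsum_congr hG

theorem mellinConvergent_exp_neg_mul {s : ℂ} (hs : 0 < s.re) {p : ℝ} (hp : 0 < p) :
    MellinConvergent (fun t : ℝ ↦ (Real.exp (-p * t) : ℂ)) s := by
  have h : MellinConvergent (fun t : ℝ ↦ (Real.exp (-t) : ℂ)) s := by
    simpa only [MellinConvergent, smul_eq_mul, mul_comm] using Complex.GammaIntegral_convergent hs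
  simpa only [neg_mul] using (MellinConvergent.comp_mul_left hp).2 h

theorem mellinConvergent_of_hasSum_exp {ι : Type*} [Countable ι] {a : ι → ℂ} {p : ι → ℝ}
    {F : ℝ → ℂ} {s : ℂ} (hp : ∀ i, 0 < p i) (hs : 0 < s.re)
    (hF : ∀ t ∈ Ioi 0, HasSum (fun i ↦ a i * Real.exp (-p i * t)) (F t))
    (h_sum : Summable fun i ↦ ‖a i‖ / p i ^ s.re) :
    MellinConvergent F s := by
  have hterm (i : ι) : MellinConvergent (fun t : ℝ ↦ a i * Real.exp (-p i * t)) s := by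
    simpa only [smul_eq_mul] using (mellinConvergent_exp_neg_mul hs (hp i)).const_smul (a i)
  have hnorm (i : ι) : ∫ t : ℝ in Ioi 0, ‖(t : ℂ) ^ (s - 1) • (a i * Real.exp (-p i * t))‖ =
      Real.Gamma s.re * (‖a i‖ / p i ^ s.re) := by
    have h := Real.integral_rpow_mul_exp_neg_mul_Ioi hs (hp i)
    rw [Real.div_rpow zero_le_one (hp i).le, Real.one_rpow] at h
    calc ∫ t : ℝ in Ioi 0, ‖(t : ℂ) ^ (s - 1) • (a i * Real.exp (-p i * t))‖
        = ∫ t : ℝ in Ioi 0, ‖a i‖ * (t ^ (s.re - 1) * Real.exp (-(p i * t))) := by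
          refine setIntegral_congr_fun measurableSet_Ioi fun t (ht : 0 < t) ↦ ?_
          rw [smul_eq_mul, norm_mul, norm_mul, norm_real, Real.norm_of_nonneg (Real.exp_pos _).le,
            norm_cpow_eq_rpow_re_of_pos ht, sub_re, one_re, neg_mul]
          ring
      _ = Real.Gamma s.re * (‖a i‖ / p i ^ s.re) := by
          rw [integral_const_mul, h]
          ring
  refine IntegrableOn.congr_fun (integrable_tsum_of_summable_integral_norm hterm
    ((h_sum.mul_left (Real.Gamma s.re)).congr fun i ↦ (hnorm i).symm))
    (fun t ht ↦ ?_) measurableSet_Ioi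
  rw [← (hF t ht).tsum_eq, tsum_const_smul'']

theorem tsum_tsum_mul_pow_div_factorial_eq_tsum_mul_exp {ι : Type*} {b w : ι → ℂ}
    (hb : Summable fun i ↦ ‖b i‖) (hw : ∀ i, ‖w i‖ ≤ 1) (z : ℂ) :
    ∑' k : ℕ, (∑' i, b i * w i ^ k) * z ^ k / k ! = ∑' i, b i * exp (w i * z) := by
  have hbound : Summable fun ik : ι × ℕ ↦ ‖b ik.1‖ * (‖z‖ ^ ik.2 / ik.2 !) :=
    hb.mul_of_nonneg (Real.summable_pow_div_factorial ‖z‖) (fun _ ↦ norm_nonneg _)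
      fun _ ↦ by positivity
  have hsum : Summable fun ik : ι × ℕ ↦ b ik.1 * (w ik.1 * z) ^ ik.2 / ik.2 ! := by
    refine hbound.of_norm_bounded fun ⟨i, k⟩ ↦ ?_
    rw [norm_div, norm_mul, norm_pow, norm_mul, mul_pow, Complex.norm_natCast, mul_div_assoc]
    gcongr
    exact mul_le_of_le_one_left (by positivity) (pow_le_one₀ (norm_nonneg _) (hw i))
  calc ∑' k : ℕ, (∑' i, b i * w i ^ k) * z ^ k / k !
      = ∑' k : ℕ, ∑' i, b i * (w i * z) ^ k / k ! := by
        refine tsum_congr fun k ↦ ?_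
        rw [← tsum_mul_right, ← tsum_div_const]
        exact tsum_congr fun i ↦ by ring
    _ = ∑' i, ∑' k : ℕ, b i * (w i * z) ^ k / k ! := hsum.tsum_comm
    _ = ∑' i, b i * exp (w i * z) := by
        refine tsum_congr fun i ↦ ?_
        simp_rw [mul_div_assoc]
        rw [tsum_mul_left, exp_eq_exp_ℂ, (NormedSpace.expSeries_div_hasSum_exp _).tsum_eq]

section

variable {ι : Type*}

/-- For `p i = (i + 1) ^ (-c)` the inner sum is `f (c (k + 1))`, so this is `R_c` reindexed by
`k ↦ k + 1`. -/
noncomputable def rieszFunction (a : ι → ℂ) (p : ι → ℝ) (z : ℂ) : ℂ :=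
  ∑' k : ℕ, (-1) ^ k * (∑' i, a i * (p i : ℂ) ^ (k + 1)) * z ^ (k + 1) / k !

theorem rieszFunction_eq_mul_tsum_exp {a : ι → ℂ} {p : ι → ℝ} (hp₀ : ∀ i, 0 ≤ p i)
    (hp₁ : ∀ i, p i ≤ 1) (ha : Summable fun i ↦ ‖a i‖ * p i) (z : ℂ) :
    rieszFunction a p z = z * ∑' i, a i * p i * exp (-p i * z) := by
  have hb : Summable fun i ↦ ‖a i * p i‖ := ha.congr fun i ↦ by
    rw [norm_mul, norm_real, Real.norm_of_nonneg (hp₀ i)]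
  have hw (i : ι) : ‖-(p i : ℂ)‖ ≤ 1 := by
    rw [norm_neg, norm_real, Real.norm_of_nonneg (hp₀ i)]; exact hp₁ i
  rw [rieszFunction, ← tsum_tsum_mul_pow_div_factorial_eq_tsum_mul_exp hb hw, ← tsum_mul_left]
  refine tsum_congr fun k ↦ ?_
  rw [← tsum_mul_left, ← tsum_mul_right, ← tsum_mul_right, ← tsum_div_const, ← tsum_div_const,
    ← tsum_mul_left]
  refine tsum_congr fun i ↦ ?_
  rw [neg_pow]
  ring

theorem hasMellin_rieszFunction [Countable ι] {a : ι → ℂ} {p : ι → ℝ} (hp₀ : ∀ i, 0 < p i)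
    (hp₁ : ∀ i, p i ≤ 1) {s : ℂ} (hs : -1 < s.re) (ha : Summable fun i ↦ ‖a i‖ * p i)
    (has : Summable fun i ↦ ‖a i‖ * p i ^ (-s.re)) :
    HasMellin (fun t : ℝ ↦ rieszFunction a p t) s
      (Gamma (s + 1) * ∑' i, a i * (p i : ℂ) ^ (-s)) := by
  set F : ℝ → ℂ := fun t ↦ ∑' i, a i * p i * Real.exp (-p i * t)
  have hs₁ : 0 < (s + 1).re := by rw [add_re, one_re]; linarith
  have hF (t : ℝ) (ht : t ∈ Ioi 0) :
      HasSum (fun i ↦ a i * p i * Real.exp (-p i * t)) (F t) := by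
    refine Summable.hasSum (Summable.of_norm_bounded ha fun i ↦ ?_)
    rw [norm_mul, norm_mul, norm_real, norm_real, Real.norm_of_nonneg (hp₀ i).le,
      Real.norm_of_nonneg (Real.exp_pos _).le]
    refine mul_le_of_le_one_right (mul_nonneg (norm_nonneg _) (hp₀ i).le) (Real.exp_le_one_iff.2 ?_)
    nlinarith [hp₀ i, mem_Ioi.1 ht]
  have h_sum : Summable fun i ↦ ‖a i * p i‖ / p i ^ (s + 1).re := has.congr fun i ↦ by
    rw [norm_mul, norm_real, Real.norm_of_nonneg (hp₀ i).le, add_re, one_re,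
      Real.rpow_add (hp₀ i), Real.rpow_one, Real.rpow_neg (hp₀ i).le]
    field_simp [(hp₀ i).ne']
  have hR : (fun t : ℝ ↦ rieszFunction a p t) = fun t : ℝ ↦ (t : ℂ) ^ (1 : ℂ) • F t := by
    ext t
    rw [rieszFunction_eq_mul_tsum_exp (fun i ↦ (hp₀ i).le) hp₁ ha, cpow_one, smul_eq_mul]
    simp only [F, ofReal_exp, ofReal_mul, ofReal_neg]
  rw [hR]
  refine ⟨MellinConvergent.cpow_smul.2 (mellinConvergent_of_hasSum_exp hp₀ hs₁ hF h_sum), ?_⟩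
  rw [mellin_cpow_smul, ← (hasSum_mellin (fun i ↦ Or.inr (hp₀ i)) hs₁ hF h_sum).tsum_eq,
    ← tsum_mul_left]
  refine tsum_congr fun i ↦ ?_
  have hp : (p i : ℂ) ≠ 0 := ofReal_ne_zero.2 (hp₀ i).ne'
  rw [cpow_add _ _ hp, cpow_one, cpow_neg]
  field_simp

end

theorem riesz_general_mellin_general
    (a : ℕ → ℂ) (σ : ℝ)
    (hconv : ∀ s : ℂ, σ < s.re →
      Summable fun n : ℕ => ‖a (n + 1) / ((n + 1 : ℕ) : ℂ) ^ s‖)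
    (f : ℂ → ℂ)
    (hf : ∀ s : ℂ, σ < s.re → f s = ∑' n : ℕ, a (n + 1) / ((n + 1 : ℕ) : ℂ) ^ s)
    (c : ℝ) (hc : max σ 0 < c)
    (s : ℝ) (hs₁ : -1 < s) (hs₂ : s < -σ / c) :
    IntegrableOn
      (fun x : ℝ =>
        (∑' k : ℕ,
            (-1 : ℂ) ^ k * f ((c * (k + 1) : ℝ) : ℂ) * (x : ℂ) ^ (k + 1) /
              (Nat.factorial k : ℂ)) * ((x ^ (s - 1) : ℝ) : ℂ))
      (Ioi (0 : ℝ)) ∧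
    (∫ x : ℝ in Ioi (0 : ℝ),
        (∑' k : ℕ,
            (-1 : ℂ) ^ k * f ((c * (k + 1) : ℝ) : ℂ) * (x : ℂ) ^ (k + 1) /
              (Nat.factorial k : ℂ)) * ((x ^ (s - 1) : ℝ) : ℂ)) =
      f ((-(c * s) : ℝ) : ℂ) * Complex.Gamma ((s : ℂ) + 1) := by
  obtain ⟨hσc, hc₀⟩ := max_lt_iff.1 hc
  have hσcs : σ < -(c * s) := by
    have := (lt_div_iff₀ hc₀).1 hs₂
    linarith
  set p : ℕ → ℝ := fun n ↦ ((n + 1 : ℕ) : ℝ) ^ (-c)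
  have hp₀ (n : ℕ) : 0 < p n := Real.rpow_pos_of_pos (Nat.cast_pos.2 n.succ_pos) _
  have hp₁ (n : ℕ) : p n ≤ 1 :=
    Real.rpow_le_one_of_one_le_of_nonpos (by simp) (neg_nonpos.2 hc₀.le)
  have hR (x : ℝ) : (∑' k : ℕ, (-1 : ℂ) ^ k * f ((c * (k + 1) : ℝ) : ℂ) * (x : ℂ) ^ (k + 1) /
      (Nat.factorial k : ℂ)) = rieszFunction (fun n ↦ a (n + 1)) p x := by
    refine tsum_congr fun k ↦ ?_
    rw [eq_tsum_mul_rpow_neg_rpow hf (by nlinarith [k.cast_nonneg (α := ℝ)])]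
    congr 3
    exact tsum_congr fun n ↦ by rw [← Nat.cast_succ, Real.rpow_natCast, ofReal_pow]
  have hM := hasMellin_rieszFunction (a := fun n ↦ a (n + 1)) hp₀ hp₁ (s := s) (by rwa [ofReal_re])
    (by simpa only [Real.rpow_one] using summable_norm_mul_rpow_neg_rpow hconv (x := 1) (by simpa))
    (by simpa only [ofReal_re] using summable_norm_mul_rpow_neg_rpow hconv (x := -s) (by simpa))
  have hintegrand (x : ℝ) (hx : x ∈ Ioi 0) : (∑' k : ℕ, (-1 : ℂ) ^ k * f ((c * (k + 1) : ℝ) : ℂ) *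
      (x : ℂ) ^ (k + 1) / (Nat.factorial k : ℂ)) * ((x ^ (s - 1) : ℝ) : ℂ) =
      (x : ℂ) ^ ((s : ℂ) - 1) • rieszFunction (fun n ↦ a (n + 1)) p x := by
    rw [hR, smul_eq_mul, mul_comm, ofReal_cpow (le_of_lt hx), ofReal_sub, ofReal_one]
  refine ⟨hM.1.congr_fun (fun x hx ↦ (hintegrand x hx).symm) measurableSet_Ioi, ?_⟩
  rw [setIntegral_congr_fun measurableSet_Ioi hintegrand, ← mellin, hM.2, mul_comm, ← mul_neg,
    eq_tsum_mul_rpow_neg_rpow hf (by linarith)]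
  congr 1
  exact tsum_congr fun n ↦ by rw [ofReal_cpow (hp₀ n).le, ofReal_neg]

/-- Let `σ` be the abscissa of absolute convergence of the Dirichlet series
`f(s) = Σ_{n≥1} aₙ n^{-s}` (the infimum of the real `t` for which `Σ |aₙ| n^{-t}` converges),
and let `c > max(σ, 0)`.  Then for every real `s` with `-1 < s < -σ/c`, the Mellin transform
of `R_c` exists and `∫_0^∞ R_c(x) x^{s-1} dx = f(-cs) Γ(s+1)`, where
`R_c(x) = Σ_{k≥1} (-1)^{k+1} f(ck) x^k/(k-1)!` (reindexed by `k ↦ k + 1`). -/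
theorem riesz_general_mellin
    (a : ℕ → ℂ) (σ : ℝ)
    (hσ : σ = sInf {t : ℝ | Summable fun n : ℕ => ‖a (n + 1)‖ / ((n : ℝ) + 1) ^ t})
    (hconv : ∀ s : ℂ, σ < s.re →
      Summable fun n : ℕ => ‖a (n + 1) / ((n + 1 : ℕ) : ℂ) ^ s‖)
    (f : ℂ → ℂ)
    (hf : ∀ s : ℂ, σ < s.re → f s = ∑' n : ℕ, a (n + 1) / ((n + 1 : ℕ) : ℂ) ^ s)
    (c : ℝ) (hc : max σ 0 < c)
    (s : ℝ) (hs₁ : -1 < s) (hs₂ : s < -σ / c) :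
    IntegrableOn
      (fun x : ℝ =>
        (∑' k : ℕ,
            (-1 : ℂ) ^ k * f ((c * (k + 1) : ℝ) : ℂ) * (x : ℂ) ^ (k + 1) /
              (Nat.factorial k : ℂ)) * ((x ^ (s - 1) : ℝ) : ℂ))
      (Ioi (0 : ℝ)) ∧
    (∫ x : ℝ in Ioi (0 : ℝ),
        (∑' k : ℕ,
            (-1 : ℂ) ^ k * f ((c * (k + 1) : ℝ) : ℂ) * (x : ℂ) ^ (k + 1) /
              (Nat.factorial k : ℂ)) * ((x ^ (s - 1) : ℝ) : ℂ)) =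
      f ((-(c * s) : ℝ) : ℂ) * Complex.Gamma ((s : ℂ) + 1) :=
  riesz_general_mellin_general a σ hconv f hf c hc s hs₁ hs₂
end

section
/- Let ρ be a nontrivial zero of the Riemann zeta function that is simple (ζ(ρ) = 0, 0 < Re(ρ) < 1, ζ'(ρ) ≠ 0), and let x > 0 be real. Then the function s ↦ x^{-s} π^{s+1} / (sin(πs) · κ(-2s)) has a simple pole at s = -ρ/2 with residue π·csc(πρ/2) / (2 κ'(ρ)) · (x/π)^{ρ/2}, and this residue equals Γ(1 - ρ/2) / (2 ζ'(ρ)) · x^{ρ/2}; equivalently, lim_{s → -ρ/2} (s + ρ/2) · x^{-s} π^{s+1} / (sin(πs) · κ(-2s)) = Γ(1 - ρ/2) · x^{ρ/2} / (2 ζ'(ρ)). -/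
/-!
Since `ζ(ρ) = 0` and `Γℝ(ρ) ≠ 0`, differentiating `ζ = κ / Γℝ` at `ρ` gives
`κ'(ρ) = Γℝ(ρ) ζ'(ρ) ≠ 0`, so `s ↦ κ(-2s)` has a simple zero at `-ρ/2` with derivative
`-2 κ'(ρ)`, while `x^{-s} π^{s+1} / sin(πs)` is holomorphic and nonzero there. The residue is
therefore the quotient of the two, and Euler's reflection formula
`Γ(ρ/2) Γ(1 - ρ/2) = π / sin(πρ/2)` turns `π csc(πρ/2) / Γℝ(ρ)` into `Γ(1 - ρ/2) π^{ρ/2}`.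
-/

open Complex Real Topology Filter

theorem HasDerivAt.tendsto_sub_mul_div_of_eq_zero {𝕜 : Type*} [NontriviallyNormedField 𝕜]
    {g h : 𝕜 → 𝕜} {a g' : 𝕜} (hg : HasDerivAt g g' a) (hga : g a = 0) (hg' : g' ≠ 0)
    (hh : ContinuousAt h a) :
    Tendsto (fun z => (z - a) * (h z / g z)) (𝓝[≠] a) (𝓝 (h a / g')) := by
  have hslope : Tendsto (fun z => g z / (z - a)) (𝓝[≠] a) (𝓝 g') := by
    simpa [slope_fun_def_field, hga] using hasDerivAt_iff_tendsto_slope.mp hg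
  refine ((hh.tendsto.mono_left nhdsWithin_le_nhds).div hslope hg').congr fun z => ?_
  rw [Pi.div_apply, div_div_eq_mul_div]
  ring

lemma Complex.mem_integerComplement_of_re_mem_Ioo {z : ℂ} (n : ℤ)
    (hz : z.re ∈ Set.Ioo (n : ℝ) (n + 1)) : z ∈ integerComplement := by
  rintro ⟨m, rfl⟩
  obtain ⟨h₁, h₂⟩ := hz
  simp only [intCast_re] at h₁ h₂
  norm_cast at h₁ h₂
  omega

lemma pi_div_sin_div_Gammaℝ {s : ℂ} (hΓ : Gammaℝ s ≠ 0) :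
    π / Complex.sin (π * s / 2) / Gammaℝ s = Complex.Gamma (1 - s / 2) * π ^ (s / 2) := by
  have hΓ' : Complex.Gamma (s / 2) ≠ 0 := by
    rw [Gammaℝ_def] at hΓ
    exact right_ne_zero_of_mul hΓ
  rw [mul_div_assoc, ← Complex.Gamma_mul_Gamma_one_sub, Gammaℝ_def, neg_div, cpow_neg]
  field_simp

lemma completedRiemannZeta_eq_zero_of_riemannZeta_eq_zero {s : ℂ} (hs : s ≠ 0)
    (hΓ : Gammaℝ s ≠ 0) (hζ : riemannZeta s = 0) : completedRiemannZeta s = 0 := by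
  simpa [riemannZeta_def_of_ne_zero hs, hΓ] using hζ

lemma deriv_completedRiemannZeta_of_riemannZeta_eq_zero {s : ℂ} (hs₀ : s ≠ 0) (hs₁ : s ≠ 1)
    (hΓ : Gammaℝ s ≠ 0) (hζ : riemannZeta s = 0) :
    deriv completedRiemannZeta s = Gammaℝ s * deriv riemannZeta s := by
  have hζ_eq : riemannZeta =ᶠ[𝓝 s] fun t => completedRiemannZeta t * (Gammaℝ t)⁻¹ :=
    (eventually_ne_nhds hs₀).mono fun t ht => by rw [riemannZeta_def_of_ne_zero ht, div_eq_mul_inv]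
  rw [hζ_eq.deriv_eq, deriv_fun_mul (differentiableAt_completedZeta hs₀ hs₁)
    (differentiable_Gammaℝ_inv s), completedRiemannZeta_eq_zero_of_riemannZeta_eq_zero hs₀ hΓ hζ,
    zero_mul, add_zero]
  field_simp

lemma tendsto_add_half_mul_div_completedRiemannZeta_neg_two_mul {ρ : ℂ} {h : ℂ → ℂ}
    (hρ₀ : ρ ≠ 0) (hρ₁ : ρ ≠ 1) (hκ : completedRiemannZeta ρ = 0)
    (hκ' : deriv completedRiemannZeta ρ ≠ 0) (hh : ContinuousAt h (-ρ / 2)) :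
    Tendsto (fun s => (s + ρ / 2) * (h s / completedRiemannZeta (-2 * s))) (𝓝[≠] (-ρ / 2))
      (𝓝 (h (-ρ / 2) / (deriv completedRiemannZeta ρ * -2))) := by
  have hg : HasDerivAt (fun s => completedRiemannZeta (-2 * s))
      (deriv completedRiemannZeta ρ * -2) (-ρ / 2) :=
    (differentiableAt_completedZeta hρ₀ hρ₁).hasDerivAt.comp_of_eq (-ρ / 2)
      (hasDerivAt_const_mul _) (by ring)
  convert hg.tendsto_sub_mul_div_of_eq_zero ?_ (mul_ne_zero hκ' (by norm_num)) hh using 2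
  · ring
  · rwa [show -2 * (-ρ / 2) = ρ by ring]

/-- Let `ρ` be a simple nontrivial zero of the Riemann zeta function and
let `x > 0` be real.  Then the function `s ↦ x^{-s} π^{s+1} / (sin(πs) κ(-2s))` (where `κ` is
the completed zeta function `Γ(s/2) π^{-s/2} ζ(s)`, analytically continued, i.e. Mathlib's
`completedRiemannZeta`) has a simple pole at `s = -ρ/2` with residue
`π csc(πρ/2) / (2 κ'(ρ)) · (x/π)^{ρ/2}`, and this residue equals
`Γ(1 - ρ/2) x^{ρ/2} / (2 ζ'(ρ))`. -/
theorem residue_at_neg_half_zero (ρ : ℂ) (hζρ : riemannZeta ρ = 0)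
    (hρ₁ : 0 < ρ.re) (hρ₂ : ρ.re < 1) (hsimple : deriv riemannZeta ρ ≠ 0)
    (x : ℝ) (hx : 0 < x) :
    Tendsto
      (fun s : ℂ => (s + ρ / 2) *
        ((x : ℂ) ^ (-s) * (π : ℂ) ^ (s + 1) /
          (Complex.sin ((π : ℂ) * s) * completedRiemannZeta (-2 * s))))
      (𝓝[≠] (-ρ / 2))
      (𝓝 ((π : ℂ) / Complex.sin ((π : ℂ) * ρ / 2) / (2 * deriv completedRiemannZeta ρ) *
        ((x : ℂ) / (π : ℂ)) ^ (ρ / 2))) ∧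
    (π : ℂ) / Complex.sin ((π : ℂ) * ρ / 2) / (2 * deriv completedRiemannZeta ρ) *
        ((x : ℂ) / (π : ℂ)) ^ (ρ / 2) =
      Complex.Gamma (1 - ρ / 2) / (2 * deriv riemannZeta ρ) * (x : ℂ) ^ (ρ / 2) := by
  have hρ₀ : ρ ≠ 0 := by rintro rfl; simp at hρ₁
  have hρ₁' : ρ ≠ 1 := by rintro rfl; simp at hρ₂
  have hΓ : Gammaℝ ρ ≠ 0 := Gammaℝ_ne_zero_of_re_pos hρ₁
  have hπ : (π : ℂ) ≠ 0 := ofReal_ne_zero.mpr Real.pi_ne_zero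
  have hκ' := deriv_completedRiemannZeta_of_riemannZeta_eq_zero hρ₀ hρ₁' hΓ hζρ
  have hsin : Complex.sin (π * (-ρ / 2)) ≠ 0 :=
    sin_pi_mul_ne_zero <| mem_integerComplement_of_re_mem_Ioo (-1) <| by
      constructor <;> simp <;> linarith
  have hcont : ContinuousAt (fun s : ℂ => (x : ℂ) ^ (-s) * (π : ℂ) ^ (s + 1) /
      Complex.sin (π * s)) (-ρ / 2) :=
    ((continuousAt_neg.const_cpow (.inl (ofReal_ne_zero.mpr hx.ne'))).mul
      ((continuousAt_id.add continuousAt_const).const_cpow (.inl hπ))).div (by fun_prop) hsin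
  refine ⟨?_, ?_⟩
  · convert tendsto_add_half_mul_div_completedRiemannZeta_neg_two_mul hρ₀ hρ₁'
      (completedRiemannZeta_eq_zero_of_riemannZeta_eq_zero hρ₀ hΓ hζρ)
      (hκ' ▸ mul_ne_zero hΓ hsimple) hcont using 2
    · rw [div_div]
    · rw [show (π : ℂ) * ρ / 2 = -(π * (-ρ / 2)) by ring, Complex.sin_neg,
        show -(-ρ / 2) = ρ / 2 by ring, show -ρ / 2 + 1 = -(ρ / 2) + 1 by ring,
        cpow_add _ _ hπ, cpow_neg, cpow_one, div_cpow_ofReal_nonneg hx.le Real.pi_pos.le]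
      field_simp
  · calc _ = π / Complex.sin (π * ρ / 2) / Gammaℝ ρ / (2 * deriv riemannZeta ρ) *
          ((x : ℂ) ^ (ρ / 2) / (π : ℂ) ^ (ρ / 2)) := by
          rw [hκ', div_cpow_ofReal_nonneg hx.le Real.pi_pos.le]; ring
      _ = _ := by rw [pi_div_sin_div_Gammaℝ hΓ]; field_simp
end
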